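/- arXiv:1708.07595 — 2 statements merged into one kernel-verified Lean document; each statement's English description precedes it below -/
import Mathlib

section
/- Assume in addition that d₁ > d₂ > … > d_p (strict inequalities). Let n > 0, set A = −(n/2)·log det Σ − (n/2)·tr(Σ⁻¹S) and B = −(n/2)·(Σ_{i=1}^k log λ_i + (p−k) log λ) − (n/2)·Σ_{i=1}^k d_i/λ_i − (n/2)·Σ_{i=k+1}^p d_i/λ. Then there exists a real number ρ ≥ 0 such that A = B − (1/2)·ρ·n·Σ_{i=1}^k Σ_{j=i+1}^p (d_i − d_j) P_{ij}² / λ_i. -/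
/-!
Put `μ = λ⁻¹` and `W = (P_ij²)`, doubly stochastic since `P` is orthogonal. Then
`tr(Σ⁻¹S) = μ ⬝ᵥ W d`, so `A = B - (n/2) g` with gap `g = μ ⬝ᵥ W d - μ ⬝ᵥ d`. By Birkhoff's theorem
`W` is a convex combination of permutation matrices, so the rearrangement inequality (`μ`
increasing, `d` decreasing) gives `g ≥ 0`. The penalty `∑_{i<k} ∑_{j>i} (d_i - d_j) P_ij² / λ_i` is
nonnegative; if it vanishes, the first `k` rows of `W` are lower triangular, so `(W d)_i ≥ d_i` on
them, while `μ_i` takes its maximum `λ⁻¹` on the other rows, and as `W` preserves `∑ d_i` this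
forces `g ≤ 0`. Either way `g` is a nonnegative multiple of the penalty.
-/

open Matrix Finset

namespace Matrix

variable {n : Type*} [Fintype n] [DecidableEq n]

lemma map_sq_mem_doublyStochastic {R : Type*} [CommRing R] [LinearOrder R] [IsStrictOrderedRing R]
    {P : Matrix n n R} (hP : Pᵀ * P = 1) : P.map (· ^ 2) ∈ doublyStochastic R n := by
  have hP' : P * Pᵀ = 1 := mul_eq_one_comm.mp hP
  refine mem_doublyStochastic_iff_sum.2 ⟨fun i j => sq_nonneg _, fun i => ?_, fun j => ?_⟩
  · simpa [mul_apply, sq] using congrFun (congrFun hP' i) i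
  · simpa [mul_apply, sq] using congrFun (congrFun hP j) j

lemma trace_diagonal_mul_mul_diagonal_mul_transpose {R : Type*} [CommSemiring R]
    (μ d : n → R) (P : Matrix n n R) :
    trace (diagonal μ * P * diagonal d * Pᵀ) = μ ⬝ᵥ (P.map (· ^ 2) *ᵥ d) := by
  simp only [trace, diag, dotProduct, mulVec, map_apply, mul_sum]
  refine sum_congr rfl fun i _ => ?_
  rw [mul_apply]
  simp only [mul_diagonal, diagonal_mul, transpose_apply]
  exact sum_congr rfl fun j _ => by ring

lemma trace_conj_diagonal_mul_conj_diagonal {R : Type*} [CommSemiring R]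
    (Γ C : Matrix n n R) (μ d : n → R) :
    trace (Γ * diagonal μ * Γᵀ * (C * diagonal d * Cᵀ)) =
      μ ⬝ᵥ ((Γᵀ * C).map (· ^ 2) *ᵥ d) := by
  rw [← trace_diagonal_mul_mul_diagonal_mul_transpose, transpose_mul, transpose_transpose,
    show Γ * diagonal μ * Γᵀ * (C * diagonal d * Cᵀ) = Γ * (diagonal μ * Γᵀ * C * diagonal d * Cᵀ)
      by simp only [Matrix.mul_assoc], trace_mul_comm]
  simp only [Matrix.mul_assoc]

lemma det_conj_diagonal {R : Type*} [CommRing R] {Γ : Matrix n n R} (hΓ : Γ * Γᵀ = 1) (v : n → R) :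
    (Γ * diagonal v * Γᵀ).det = ∏ i, v i := by
  have h := congrArg det hΓ
  rw [det_mul, det_transpose, det_one] at h
  rw [det_mul, det_mul, det_transpose, det_diagonal]
  linear_combination (∏ i, v i) * h

lemma inv_conj_diagonal {K : Type*} [Field K] {Γ : Matrix n n K} (hΓ : Γ * Γᵀ = 1) {v : n → K}
    (hv : ∀ i, v i ≠ 0) : (Γ * diagonal v * Γᵀ)⁻¹ = Γ * diagonal v⁻¹ * Γᵀ := by
  have hD : (diagonal v)⁻¹ = diagonal v⁻¹ := inv_eq_right_inv <| by
    rw [diagonal_mul_diagonal, ← diagonal_one]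
    exact congrArg diagonal (funext fun i => mul_inv_cancel₀ (hv i))
  rw [Matrix.mul_inv_rev, Matrix.mul_inv_rev, hD, inv_eq_left_inv hΓ, inv_eq_right_inv hΓ,
    Matrix.mul_assoc]

section doublyStochastic

variable {R : Type*} [Field R] [LinearOrder R] [IsStrictOrderedRing R] {W : Matrix n n R}
  {μ d : n → R}

lemma dotProduct_le_dotProduct_mulVec (hW : W ∈ doublyStochastic R n) (hμd : Antivary μ d) :
    μ ⬝ᵥ d ≤ μ ⬝ᵥ (W *ᵥ d) := by
  have hlin : IsLinearMap R fun M : Matrix n n R => μ ⬝ᵥ (M *ᵥ d) :=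
    ⟨fun A B => by simp [add_mulVec, dotProduct_add], fun c A => by simp [smul_mulVec]⟩
  rw [← SetLike.mem_coe, doublyStochastic_eq_convexHull_permMatrix] at hW
  refine convexHull_min ?_ (convex_halfSpace_ge hlin _) hW
  rintro _ ⟨σ, rfl⟩
  simpa [permMatrix_mulVec, dotProduct] using hμd.sum_smul_le_sum_smul_comp_perm (σ := σ)

lemma le_mulVec_apply_of_antitone [LinearOrder n] (hW : W ∈ doublyStochastic R n)
    (hd : Antitone d) {i : n} (hi : ∀ j, i < j → W i j = 0) : d i ≤ (W *ᵥ d) i := by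
  calc d i = ∑ j, W i j * d i := by rw [← sum_mul, sum_row_of_mem_doublyStochastic hW, one_mul]
    _ ≤ ∑ j, W i j * d j := by
      refine sum_le_sum fun j _ => ?_
      rcases le_or_gt j i with hji | hij
      · exact mul_le_mul_of_nonneg_left (hd hji) (nonneg_of_mem_doublyStochastic hW)
      · simp [hi j hij]

lemma dotProduct_mulVec_le_of_le_const (hW : W ∈ doublyStochastic R n) {c : R}
    (hμ : ∀ i, μ i ≤ c) (h : ∀ i, μ i = c ∨ d i ≤ (W *ᵥ d) i) :
    μ ⬝ᵥ (W *ᵥ d) ≤ μ ⬝ᵥ d := by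
  have hsum : 1 ⬝ᵥ (W *ᵥ d) = 1 ⬝ᵥ d := by rw [dotProduct_mulVec, hW.2.2]
  have hterm : ∀ i, (μ i - c) * ((W *ᵥ d) i - d i) ≤ 0 := fun i => by
    rcases h i with h | h
    · simp [h]
    · exact mul_nonpos_of_nonpos_of_nonneg (sub_nonpos.2 (hμ i)) (sub_nonneg.2 h)
  have hsplit : μ ⬝ᵥ (W *ᵥ d) - μ ⬝ᵥ d =
      ∑ i, (μ i - c) * ((W *ᵥ d) i - d i) + c * (1 ⬝ᵥ (W *ᵥ d) - 1 ⬝ᵥ d) := by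
    simp only [dotProduct, mul_sum, ← sum_sub_distrib, ← sum_add_distrib]
    exact sum_congr rfl fun i _ => by simp only [Pi.one_apply]; ring
  rw [hsum, sub_self, mul_zero, add_zero] at hsplit
  linarith [sum_nonpos fun i (_ : i ∈ univ) => hterm i]

end doublyStochastic

end Matrix

lemma Finset.sum_filter_lt_add_sum_filter_le {ι α M : Type*} [LinearOrder α] [AddCommMonoid M]
    (s : Finset ι) (v : ι → α) (k : α) (f : ι → M) :
    ∑ i ∈ s with v i < k, f i + ∑ i ∈ s with k ≤ v i, f i = ∑ i ∈ s, f i := by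
  simpa only [not_lt] using sum_filter_add_sum_filter_not s (fun i => v i < k) f

lemma Fin.card_filter_le_val {p k : ℕ} (hk : k ≤ p) :
    #{i : Fin p | k ≤ (i : ℕ)} = p - k := by
  have h := card_filter_add_card_filter_not (s := (univ : Finset (Fin p))) (· < k)
  simp only [not_lt, card_univ, Fintype.card_fin, Fin.card_filter_val_lt] at h
  omega

lemma Fin.sum_eq_sum_filter_val_lt_add_mul {p k : ℕ} (hk : k ≤ p) {f : Fin p → ℝ} {c : ℝ}
    (hf : ∀ i : Fin p, k ≤ (i : ℕ) → f i = c) :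
    ∑ i, f i = ∑ i ∈ univ.filter (fun i : Fin p => (i : ℕ) < k), f i + ((p : ℝ) - k) * c := by
  rw [← sum_filter_lt_add_sum_filter_le univ (fun i : Fin p => (i : ℕ)) k,
    sum_congr rfl fun i hi => hf i (mem_filter.1 hi).2, Finset.sum_const, Fin.card_filter_le_val hk,
    nsmul_eq_mul, Nat.cast_sub hk]

lemma exists_nonneg_eq_mul_sum_upper_sq {ι : Type*} [Fintype ι] [LinearOrder ι] {s : Finset ι}
    {d w : ι → ℝ} {P : Matrix ι ι ℝ} {x : ℝ} (hd : StrictAnti d) (hw : ∀ i, 0 < w i)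
    (hx : 0 ≤ x) (hx0 : (∀ i ∈ s, ∀ j, i < j → P i j = 0) → x ≤ 0) :
    ∃ ρ : ℝ, 0 ≤ ρ ∧
      x = ρ * ∑ i ∈ s, ∑ j ∈ univ.filter (fun j => i < j), (d i - d j) * P i j ^ 2 / w i := by
  set T := ∑ i ∈ s, ∑ j ∈ univ.filter (fun j => i < j), (d i - d j) * P i j ^ 2 / w i
  have hterm : ∀ i j, i < j → 0 ≤ (d i - d j) * P i j ^ 2 / w i := fun i j hij =>
    div_nonneg (mul_nonneg (sub_nonneg.2 (hd hij).le) (sq_nonneg _)) (hw i).le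
  have hT : 0 ≤ T := sum_nonneg fun i _ => sum_nonneg fun j hj => hterm i j (mem_filter.1 hj).2
  rcases hT.eq_or_lt with hT0 | hTpos
  · refine ⟨0, le_rfl, (le_antisymm (hx0 fun i hi j hij => ?_) hx).trans (zero_mul T).symm⟩
    have hrow := (sum_eq_zero_iff_of_nonneg fun i _ => sum_nonneg fun j hj =>
      hterm i j (mem_filter.1 hj).2).1 hT0.symm i hi
    have hij' := (sum_eq_zero_iff_of_nonneg fun j hj => hterm i j (mem_filter.1 hj).2).1 hrow j
      (mem_filter.2 ⟨mem_univ _, hij⟩)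
    simpa [sub_ne_zero.2 (hd hij).ne', (hw i).ne'] using hij'
  · exact ⟨x / T, div_nonneg hx hT, (div_mul_cancel₀ x hTpos.ne').symm⟩

theorem loglik_decomposition_general (p k : ℕ) (hkp : k < p)
    (Γ C : Matrix (Fin p) (Fin p) ℝ)
    (lamv d : Fin p → ℝ) (lam : ℝ)
    (hΓ : Γ * Γᵀ = 1)
    (hC' : Cᵀ * C = 1)
    (hlam_anti : ∀ i j : Fin p, i ≤ j → lamv j ≤ lamv i)
    (hlam_tail : ∀ i : Fin p, k ≤ (i : ℕ) → lamv i = lam)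
    (hlam_pos : 0 < lam)
    (hd_strict : ∀ i j : Fin p, i < j → d j < d i)
    (Sig S : Matrix (Fin p) (Fin p) ℝ)
    (hSig : Sig = Γ * Matrix.diagonal lamv * Γᵀ)
    (hS : S = C * Matrix.diagonal d * Cᵀ)
    (P : Matrix (Fin p) (Fin p) ℝ) (hP : P = Γᵀ * C)
    (n : ℝ)
    (A B : ℝ)
    (hA : A = -(n / 2) * Real.log Sig.det - (n / 2) * Matrix.trace (Sig⁻¹ * S))
    (hB : B = -(n / 2) * ((∑ i ∈ Finset.univ.filter (fun i : Fin p => (i : ℕ) < k),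
              Real.log (lamv i)) + ((p : ℝ) - k) * Real.log lam)
          - (n / 2) * ∑ i ∈ Finset.univ.filter (fun i : Fin p => (i : ℕ) < k), d i / lamv i
          - (n / 2) * ∑ i ∈ Finset.univ.filter (fun i : Fin p => k ≤ (i : ℕ)), d i / lam) :
    ∃ ρ : ℝ, 0 ≤ ρ ∧
      A = B - (1 / 2) * ρ * n *
        ∑ i ∈ Finset.univ.filter (fun i : Fin p => (i : ℕ) < k),
          ∑ j ∈ Finset.univ.filter (fun j : Fin p => i < j),
            (d i - d j) * (P i j) ^ 2 / lamv i := by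
  have hlam_le : ∀ i, lam ≤ lamv i := fun i =>
    hlam_tail ⟨p - 1, by omega⟩ (by simp only; omega) ▸
      hlam_anti i _ (Fin.le_def.2 (by simp only; omega))
  have hlamv_pos : ∀ i, 0 < lamv i := fun i => hlam_pos.trans_le (hlam_le i)
  set μ : Fin p → ℝ := lamv⁻¹
  set W := P.map (· ^ 2)
  have hW : W ∈ doublyStochastic ℝ (Fin p) := map_sq_mem_doublyStochastic <| by
    rw [hP, transpose_mul, transpose_transpose, Matrix.mul_assoc, ← Matrix.mul_assoc Γ, hΓ,
      Matrix.one_mul, hC']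
  have hdiv : ∑ i ∈ univ.filter (fun i : Fin p => (i : ℕ) < k), d i / lamv i +
      ∑ i ∈ univ.filter (fun i : Fin p => k ≤ (i : ℕ)), d i / lam = μ ⬝ᵥ d := by
    have htail : ∑ i ∈ univ.filter (fun i : Fin p => k ≤ (i : ℕ)), d i / lam =
        ∑ i ∈ univ.filter (fun i : Fin p => k ≤ (i : ℕ)), d i / lamv i :=
      sum_congr rfl fun i hi => by rw [hlam_tail i (mem_filter.1 hi).2]
    rw [htail, sum_filter_lt_add_sum_filter_le]
    exact sum_congr rfl fun i _ => by simp [μ, div_eq_inv_mul]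
  have hAB : A = B - n / 2 * (μ ⬝ᵥ (W *ᵥ d) - μ ⬝ᵥ d) := by
    rw [hA, hB, hSig, hS, det_conj_diagonal hΓ, Real.log_prod fun i _ => (hlamv_pos i).ne',
      Fin.sum_eq_sum_filter_val_lt_add_mul hkp.le fun i hi => by rw [hlam_tail i hi],
      inv_conj_diagonal hΓ fun i => (hlamv_pos i).ne', trace_conj_diagonal_mul_conj_diagonal, ← hP]
    linear_combination (n / 2) * hdiv
  have hd_anti : Antitone d := StrictAnti.antitone hd_strict
  have hgap_nonneg : μ ⬝ᵥ d ≤ μ ⬝ᵥ (W *ᵥ d) := dotProduct_le_dotProduct_mulVec hW <|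
    Monotone.antivary (fun i j hij => inv_anti₀ (hlamv_pos j) (hlam_anti i j hij)) hd_anti
  have hgap_nonpos : (∀ i ∈ univ.filter (fun i : Fin p => (i : ℕ) < k), ∀ j, i < j → P i j = 0) →
      μ ⬝ᵥ (W *ᵥ d) ≤ μ ⬝ᵥ d := fun hP0 =>
    dotProduct_mulVec_le_of_le_const hW (fun i => inv_anti₀ hlam_pos (hlam_le i)) fun i =>
      (le_or_gt k i).imp (fun hi => by simp [μ, hlam_tail i hi]) fun hi =>
        le_mulVec_apply_of_antitone hW hd_anti fun j hij => by
          simp [W, hP0 i (mem_filter.2 ⟨mem_univ _, hi⟩) j hij]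
  obtain ⟨ρ, hρ, hgap⟩ := exists_nonneg_eq_mul_sum_upper_sq hd_strict hlamv_pos
    (sub_nonneg.2 hgap_nonneg) fun hP0 => sub_nonpos.2 (hgap_nonpos hP0)
  exact ⟨ρ, hρ, by rw [hAB, hgap]; ring⟩

/-- With `Σ = Γ diag(λ) Γᵀ` (Γ orthogonal, eigenvalues
`λ₁ ≥ … ≥ λ_k > λ_{k+1} = … = λ_p = λ > 0`), `S = C diag(d) Cᵀ`
(C orthogonal, `d₁ > … > d_p`), `P = Γᵀ C`, `n > 0`,
`A = −(n/2)·log det Σ − (n/2)·tr(Σ⁻¹S)` and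
`B = −(n/2)·(Σ_{i≤k} log λ_i + (p−k) log λ) − (n/2)·Σ_{i≤k} d_i/λ_i − (n/2)·Σ_{i>k} d_i/λ`,
there is `ρ ≥ 0` with `A = B − (ρn/2)·Σ_{i=1}^k Σ_{j>i} (d_i − d_j) P_{ij}²/λ_i`. -/
theorem loglik_decomposition (p k : ℕ) (hk : 1 ≤ k) (hkp : k < p)
    (Γ C : Matrix (Fin p) (Fin p) ℝ)
    (lamv d : Fin p → ℝ) (lam : ℝ)
    (hΓ : Γ * Γᵀ = 1) (hΓ' : Γᵀ * Γ = 1)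
    (hC : C * Cᵀ = 1) (hC' : Cᵀ * C = 1)
    (hlam_anti : ∀ i j : Fin p, i ≤ j → lamv j ≤ lamv i)
    (hlam_tail : ∀ i : Fin p, k ≤ (i : ℕ) → lamv i = lam)
    (hlam_gt : ∀ i : Fin p, (i : ℕ) < k → lam < lamv i)
    (hlam_pos : 0 < lam)
    (hd_strict : ∀ i j : Fin p, i < j → d j < d i)
    (Sig S : Matrix (Fin p) (Fin p) ℝ)
    (hSig : Sig = Γ * Matrix.diagonal lamv * Γᵀ)
    (hS : S = C * Matrix.diagonal d * Cᵀ)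
    (P : Matrix (Fin p) (Fin p) ℝ) (hP : P = Γᵀ * C)
    (n : ℝ) (hn : 0 < n)
    (A B : ℝ)
    (hA : A = -(n / 2) * Real.log Sig.det - (n / 2) * Matrix.trace (Sig⁻¹ * S))
    (hB : B = -(n / 2) * ((∑ i ∈ Finset.univ.filter (fun i : Fin p => (i : ℕ) < k),
              Real.log (lamv i)) + ((p : ℝ) - k) * Real.log lam)
          - (n / 2) * ∑ i ∈ Finset.univ.filter (fun i : Fin p => (i : ℕ) < k), d i / lamv i
          - (n / 2) * ∑ i ∈ Finset.univ.filter (fun i : Fin p => k ≤ (i : ℕ)), d i / lam) :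
    ∃ ρ : ℝ, 0 ≤ ρ ∧
      A = B - (1 / 2) * ρ * n *
        ∑ i ∈ Finset.univ.filter (fun i : Fin p => (i : ℕ) < k),
          ∑ j ∈ Finset.univ.filter (fun j : Fin p => i < j),
            (d i - d j) * (P i j) ^ 2 / lamv i :=
  loglik_decomposition_general p k hkp Γ C lamv d lam hΓ hC' hlam_anti hlam_tail hlam_pos hd_strict
    Sig S hSig hS P hP n A B hA hB
end

section
/- For every c ≥ 0.12, 1.1·φ(c) < 1; that is, 1.1·(1/2 + √(1/c) − log(1+√c)/c) < 1 for all c ≥ 0.12. -/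
/-!
With `t = √c` the claim reads `1.1 · (t²/2 + t − log (1 + t)) < t²`, i.e. `logGap t > 0` where
`logGap t = log (1 + t) − t + (9/22) t²` (note `9/22 = 1/1.1 − 1/2`). Its derivative
`t (9t − 2) / (11 (1 + t))` is positive for `t > 2/9`, so `logGap` is increasing there, and it
suffices to check `logGap 0.345 > 0` (since `√0.12 > 0.345`), which is a Taylor bound on `exp`.
-/

open Real Set

noncomputable def logGap (u : ℝ) : ℝ := log (1 + u) - u + 9 / 22 * u ^ 2

lemma hasDerivAt_logGap {u : ℝ} (hu : -1 < u) :
    HasDerivAt logGap (u * (9 * u - 2) / (11 * (1 + u))) u := by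
  have hu' : 1 + u ≠ 0 := by linarith
  have hlog : HasDerivAt (fun x ↦ log (1 + x)) (1 / (1 + u)) u := by
    simpa only [one_div] using ((hasDerivAt_id' u).const_add 1).log hu'
  refine ((hlog.sub (hasDerivAt_id u)).add
    ((hasDerivAt_pow 2 u).const_mul (9 / 22 : ℝ))).congr_deriv ?_
  field_simp
  ring

lemma logGap_strictMonoOn : StrictMonoOn logGap (Ici (2 / 9)) := by
  refine strictMonoOn_of_deriv_pos (convex_Ici _) (fun u hu ↦ ?_) fun u hu ↦ ?_
  · exact (hasDerivAt_logGap (by rw [mem_Ici] at hu; linarith)).continuousAt.continuousWithinAt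
  · rw [interior_Ici, mem_Ioi] at hu
    rw [(hasDerivAt_logGap (by linarith)).deriv]
    have : 0 < 9 * u - 2 := by linarith
    positivity

/-- `logGap` vanishes near `0.342`, so the point `0.345` leaves little room below `√0.12 ≈ 0.3464`. -/
lemma exp_sub_lt_one_add_d345 : exp (0.345 - 9 / 22 * 0.345 ^ 2) < 1 + 0.345 := by
  refine (exp_bound' (n := 6) (by norm_num) (by norm_num) (by norm_num)).trans_lt ?_
  norm_num [Finset.sum_range_succ, Nat.factorial]

lemma logGap_pos {u : ℝ} (hu : 0.345 ≤ u) : 0 < logGap u := by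
  have h₀ : 0 < logGap 0.345 := by
    have := (lt_log_iff_exp_lt (by norm_num)).2 exp_sub_lt_one_add_d345
    rw [logGap]
    linarith
  exact h₀.trans_le <| logGap_strictMonoOn.monotoneOn (by norm_num) (le_trans (by norm_num) hu) hu

lemma scaled_lt_one_of_logGap_pos {t : ℝ} (ht : 0 < t) (h : 0 < logGap t) :
    1.1 * (1 / 2 + 1 / t - log (1 + t) / t ^ 2) < 1 := by
  have : 1.1 * (1 / 2 + 1 / t - log (1 + t) / t ^ 2) = 1 - 1.1 * logGap t / t ^ 2 := by
    rw [logGap]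
    field_simp
    ring
  rw [this, sub_lt_self_iff]
  positivity

/-- For every `c ≥ 0.12`,
`1.1·φ(c) = 1.1·(1/2 + √(1/c) − log(1+√c)/c) < 1`. -/
theorem phi_scaled_lt_one (c : ℝ) (hc : (0.12 : ℝ) ≤ c) :
    1.1 * (1 / 2 + Real.sqrt (1 / c) - Real.log (1 + Real.sqrt c) / c) < 1 := by
  have hc₀ : 0 < c := by linarith
  have ht : 0.345 ≤ √c := le_sqrt_of_sq_le (by linarith)
  have := scaled_lt_one_of_logGap_pos (by linarith) (logGap_pos ht)
  rwa [sq_sqrt hc₀.le, ← sqrt_one, ← sqrt_div' _ hc₀.le, sqrt_one] at this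
end
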